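/- Assume that M normalizes U and that the multiplication map Ū × M × U → G, (ū, m, u) ↦ ū m u, is injective. Let J be a decomposable subgroup of G. Then the set J M J := {j₁ m j₂ : j₁, j₂ ∈ J, m ∈ M} satisfies J M J ∩ Ū = J ∩ Ū. -/
import Mathlib


open Pointwise

/-- A subgroup `J` of `G` is decomposable with respect to `(Ū, M, U)` if
`J = (J ∩ Ū)(J ∩ M)(J ∩ U)` as a setwise product. -/
def Decomposable {G : Type*} [Group G] (Ubar M U : Subgroup G) (J : Subgroup G) : Prop :=
  (J : Set G) =
    ((J : Set G) ∩ (Ubar : Set G)) * ((J : Set G) ∩ (M : Set G)) * ((J : Set G) ∩ (U : Set G))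

/-- If `M` normalizes `U`, the multiplication map `Ū × M × U → G` is
injective, and `J` is a decomposable subgroup of `G`, then `J M J ∩ Ū = J ∩ Ū`. -/
theorem JMJ_inter_Ubar_eq {G : Type*} [Group G] (Ubar M U : Subgroup G)
    (hMU : ∀ m ∈ M, ∀ u ∈ U, m * u * m⁻¹ ∈ U)
    (hinj : Function.Injective fun t : Ubar × M × U => (t.1 : G) * (t.2.1 : G) * (t.2.2 : G))
    (J : Subgroup G) (hJ : Decomposable Ubar M U J) :
    ((J : Set G) * (M : Set G) * (J : Set G)) ∩ (Ubar : Set G)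
      = (J : Set G) ∩ (Ubar : Set G) := by
  have key : ∀ (a a' : G) (ha : a ∈ Ubar) (ha' : a' ∈ Ubar) (b b' : G) (hb : b ∈ M)
      (hb' : b' ∈ M) (c c' : G) (hc : c ∈ U) (hc' : c' ∈ U),
      a * b * c = a' * b' * c' → a = a' := by
    intro a a' ha ha' b b' hb hb' c c' hc hc' h
    have := hinj (a₁ := (⟨a, ha⟩, ⟨b, hb⟩, ⟨c, hc⟩)) (a₂ := (⟨a', ha'⟩, ⟨b', hb'⟩, ⟨c', hc'⟩)) h
    exact congrArg Subtype.val (congrArg Prod.fst this)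
  ext x
  constructor
  · rintro ⟨⟨_, ⟨j₁, hj₁, m, hm, rfl⟩, j₂, hj₂, rfl⟩, hxU⟩
    -- decompose j₁ and j₂⁻¹
    have h1 : j₁ ∈ ((J : Set G) ∩ Ubar) * ((J : Set G) ∩ M) * ((J : Set G) ∩ U) := by
      rw [← hJ]; exact hj₁
    have h2 : j₂⁻¹ ∈ ((J : Set G) ∩ Ubar) * ((J : Set G) ∩ M) * ((J : Set G) ∩ U) := by
      rw [← hJ]; exact J.inv_mem hj₂
    obtain ⟨_, ⟨u1, ⟨hu1J, hu1⟩, m1, ⟨hm1J, hm1⟩, rfl⟩, v1, ⟨hv1J, hv1⟩, heq1⟩ := h1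
    obtain ⟨_, ⟨u2, ⟨hu2J, hu2⟩, m2, ⟨hm2J, hm2⟩, rfl⟩, v2, ⟨hv2J, hv2⟩, heq2⟩ := h2
    -- j₁ = u1*m1*v1, j₂⁻¹ = u2*m2*v2, so j₂ = v2⁻¹*m2⁻¹*u2⁻¹
    have hj2 : j₂ = v2⁻¹ * m2⁻¹ * u2⁻¹ := by
      have : j₂⁻¹ = u2 * m2 * v2 := heq2.symm
      rw [← inv_inv j₂, this]; group
    -- the U-element after moving things around
    have hv1' : m⁻¹ * v1 * m ∈ U := by
      simpa using hMU m⁻¹ (M.inv_mem hm) v1 hv1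
    have hw : m2 * ((m⁻¹ * v1 * m) * v2⁻¹) * m2⁻¹ ∈ U :=
      hMU m2 hm2 _ (U.mul_mem hv1' (U.inv_mem hv2))
    have hmm : m1 * m * m2⁻¹ ∈ M := M.mul_mem (M.mul_mem hm1 hm) (M.inv_mem hm2)
    have hxu2 : (j₁ * m * j₂) * u2 ∈ Ubar := Ubar.mul_mem hxU hu2
    have heq : ((j₁ * m * j₂) * u2) * 1 * 1
        = u1 * (m1 * m * m2⁻¹) * (m2 * ((m⁻¹ * v1 * m) * v2⁻¹) * m2⁻¹) := by
      rw [hj2, ← heq1]; group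
    have hx : (j₁ * m * j₂) * u2 = u1 :=
      key _ _ hxu2 hu1 _ _ (M.one_mem) hmm _ _ (U.one_mem) hw heq
    have : j₁ * m * j₂ = u1 * u2⁻¹ := by
      rw [← hx]; group
    exact ⟨by show j₁ * m * j₂ ∈ (J : Set G); rw [this]; exact J.mul_mem hu1J (J.inv_mem hu2J), hxU⟩
  · rintro ⟨hxJ, hxU⟩
    refine ⟨⟨_, ⟨x, hxJ, 1, M.one_mem, rfl⟩, 1, J.one_mem, by group⟩, hxU⟩
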